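/- Over the Laurent polynomial ring (Z/5Z)[v,v^{-1}], the ordered product of the Burau matrices B_{i_1}*...*B_{i_198}, where (i_1,...,i_198) is the word W2 = (1,3,1,3,1,3,2,2,1,3,3,2,2,1,3,3,2,2,1,3,1,2,3,2,1,1,3,2,1,2,1,3,1,3,2,1,2,1,3,1,3,2,2,2,1,3,3,2,2,1,3,3,2,2,1,3,1,2,3,2,1,1,3,2,1,2,1,3,1,3,2,1,2,1,3,1,3,2,2,2,1,3,3,2,2,1,3,3,2,2,1,3,1,2,3,2,1,1,3,2,1,2,1,3,1,3,2,1,2,1,3,1,3,2,2,2,1,3,3,2,2,1,3,3,2,2,1,3,1,2,3,2,1,1,3,2,1,2,1,3,1,3,2,1,2,1,3,1,3,2,2,1,3,2,2,1,3,2,2,1,3,2), equals -v^{132} * J, where J is the 3x3 antidiagonal permutation matrix. (This matrix equals the 5-Burau matrix of Delta^{33}; hence W2 yields a kernel element Delta^{-33}*W2 of the mod-5 Burau representation of B4 of Garside length 65.) -/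
import Mathlib


open LaurentPolynomial

/-- The reduced Burau matrices for the 4-strand braid group over `R[v,v⁻¹]` (with `v = T 1`),
indexed so that `BurauB R k` is the Burau matrix of the Artin generator `s_k` for `k = 1, 2, 3`. -/
noncomputable def BurauB (R : Type) [CommRing R] : ℕ → Matrix (Fin 3) (Fin 3) (LaurentPolynomial R)
  | 1 => !![-(T 1)^2, -(T 1), 0; 0, 1, 0; 0, 0, 1]
  | 2 => !![1, 0, 0; -(T 1), -(T 1)^2, -(T 1); 0, 0, 1]
  | 3 => !![1, 0, 0; 0, 1, 0; 0, -(T 1), -(T 1)^2]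
  | _ => 1

/-- The 3×3 antidiagonal permutation matrix `J`. -/
noncomputable def Jmat (R : Type) [CommRing R] : Matrix (Fin 3) (Fin 3) (LaurentPolynomial R) :=
  !![0, 0, 1; 0, 1, 0; 1, 0, 0]

/-- The word `W2` in the Artin generators (of length 198). -/
def W2word : List ℕ :=
  [1, 3, 1, 3, 1, 3, 2, 2, 1, 3, 3, 2, 2, 1, 3, 3, 2, 2, 1, 3, 1, 2, 3, 2, 1, 1,
   3, 2, 1, 2, 1, 3, 1, 3, 2, 1, 2, 1, 3, 1, 3, 2, 2, 2, 1, 3, 3, 2, 2, 1, 3, 3,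
   2, 2, 1, 3, 1, 2, 3, 2, 1, 1, 3, 2, 1, 2, 1, 3, 1, 3, 2, 1, 2, 1, 3, 1, 3, 2,
   2, 2, 1, 3, 3, 2, 2, 1, 3, 3, 2, 2, 1, 3, 1, 2, 3, 2, 1, 1, 3, 2, 1, 2, 1, 3,
   1, 3, 2, 1, 2, 1, 3, 1, 3, 2, 2, 2, 1, 3, 3, 2, 2, 1, 3, 3, 2, 2, 1, 3, 1, 2,
   3, 2, 1, 1, 3, 2, 1, 2, 1, 3, 1, 3, 2, 1, 2, 1, 3, 1, 3, 2, 2, 2, 1, 3, 3, 2,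
   2, 1, 3, 3, 2, 2, 1, 3, 1, 2, 3, 2, 1, 1, 3, 2, 1, 2, 1, 3, 1, 3, 2, 1, 2, 1,
   3, 1, 3, 2, 2, 1, 3, 2, 2, 1, 3, 2, 2, 1, 3, 2]

namespace BurauAux

open LaurentPolynomial

abbrev P5 := List Nat

def addP : P5 → P5 → P5
  | [], b => b
  | a, [] => a
  | a :: as, b :: bs => (a + b) :: addP as bs

def mulP : P5 → P5 → P5
  | [], _ => []
  | a :: as, b => addP (b.map (a * ·)) (0 :: mulP as b)

structure M3 where
  a : P5
  b : P5
  c : P5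
  d : P5
  e : P5
  f : P5
  g : P5
  h : P5
  i : P5
deriving DecidableEq

def vv2 : P5 := [0,0,4]
def vv1 : P5 := [0,4]

def step : ℕ → M3 → M3
  | 1, P => ⟨addP (mulP vv2 P.a) (mulP vv1 P.d), addP (mulP vv2 P.b) (mulP vv1 P.e),
             addP (mulP vv2 P.c) (mulP vv1 P.f), P.d, P.e, P.f, P.g, P.h, P.i⟩
  | 2, P => ⟨P.a, P.b, P.c,
             addP (mulP vv1 P.a) (addP (mulP vv2 P.d) (mulP vv1 P.g)),
             addP (mulP vv1 P.b) (addP (mulP vv2 P.e) (mulP vv1 P.h)),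
             addP (mulP vv1 P.c) (addP (mulP vv2 P.f) (mulP vv1 P.i)),
             P.g, P.h, P.i⟩
  | 3, P => ⟨P.a, P.b, P.c, P.d, P.e, P.f,
             addP (mulP vv1 P.d) (mulP vv2 P.g), addP (mulP vv1 P.e) (mulP vv2 P.h),
             addP (mulP vv1 P.f) (mulP vv2 P.i)⟩
  | _, P => P

def idM : M3 := ⟨[1],[],[], [],[1],[], [],[],[1]⟩

def prodM : List ℕ → M3
  | [] => idM
  | k :: l => step k (prodM l)

def canon : P5 → P5
  | [] => []
  | a :: l => match canon l with
    | [] => if a % 5 = 0 then [] else [a % 5]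
    | c => (a % 5) :: c

def canonM (A : M3) : M3 :=
  ⟨canon A.a, canon A.b, canon A.c, canon A.d, canon A.e, canon A.f,
   canon A.g, canon A.h, canon A.i⟩

def z132 : P5 := List.replicate 132 0 ++ [4]

def targetM : M3 := ⟨[],[],z132, [],z132,[], z132,[],[]⟩

noncomputable def phi : P5 → LaurentPolynomial (ZMod 5)
  | [] => 0
  | a :: l => C (a : ZMod 5) + T 1 * phi l

lemma phi_nil : phi [] = 0 := rfl

lemma phi_cons (a : ℕ) (l : P5) : phi (a :: l) = C (a : ZMod 5) + T 1 * phi l := rfl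

lemma phi_add : ∀ a b : P5, phi (addP a b) = phi a + phi b := by
  intro a
  induction a with
  | nil => intro b; simp [addP, phi_nil]
  | cons x xs ih =>
    intro b
    cases b with
    | nil => simp [addP, phi_nil]
    | cons y ys =>
      simp only [addP, phi_cons, ih, Nat.cast_add, map_add]
      ring

lemma phi_map (c : ℕ) : ∀ l : P5, phi (l.map (c * ·)) = C (c : ZMod 5) * phi l := by
  intro l
  induction l with
  | nil => simp [phi_nil]
  | cons x xs ih =>
    simp only [List.map_cons, phi_cons, ih, Nat.cast_mul, map_mul]
    ring

lemma phi_mul : ∀ a b : P5, phi (mulP a b) = phi a * phi b := by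
  intro a
  induction a with
  | nil => intro b; simp [mulP, phi_nil]
  | cons x xs ih =>
    intro b
    simp only [mulP, phi_add, phi_map, phi_cons, ih, Nat.cast_zero, map_zero]
    ring

lemma phi_mod (a : ℕ) : (((a % 5 : ℕ) : ZMod 5)) = (a : ZMod 5) := ZMod.natCast_mod a 5

lemma canon_nil : ∀ l : P5, canon l = [] → phi l = 0 := by
  intro l
  induction l with
  | nil => intro _; rfl
  | cons x xs ih =>
    intro h
    rw [canon] at h
    cases hc : canon xs with
    | nil =>
      rw [hc] at h
      by_cases hx : x % 5 = 0
      · rw [phi_cons, ih hc, ← phi_mod x, hx]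
        simp
      · simp [hx] at h
    | cons y ys => rw [hc] at h; simp at h

lemma phi_canon : ∀ l : P5, phi (canon l) = phi l := by
  intro l
  induction l with
  | nil => rfl
  | cons x xs ih =>
    rw [canon]
    cases hc : canon xs with
    | nil =>
      have hxs : phi xs = 0 := by rw [← ih, hc, phi_nil]
      by_cases hx : x % 5 = 0
      · rw [if_pos hx, phi_nil, phi_cons, hxs, ← phi_mod x, hx]
        simp
      · rw [if_neg hx, phi_cons, phi_cons, phi_nil, phi_mod, hxs]
    | cons y ys =>
      rw [phi_cons, phi_cons, phi_mod, ← phi_cons y ys, ← hc, ih, phi_cons x xs]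

noncomputable def Phi (A : M3) : Matrix (Fin 3) (Fin 3) (LaurentPolynomial (ZMod 5)) :=
  !![phi A.a, phi A.b, phi A.c; phi A.d, phi A.e, phi A.f; phi A.g, phi A.h, phi A.i]

lemma phi_vv1 : phi vv1 = -(T 1) := by
  rw [vv1, phi_cons, phi_cons, phi_nil, show ((4 : ℕ) : ZMod 5) = -1 by decide,
    Nat.cast_zero, map_zero, map_neg, map_one]
  ring

lemma phi_vv2 : phi vv2 = -(T 1) ^ 2 := by
  rw [vv2, phi_cons, phi_cons, phi_cons, phi_nil, show ((4 : ℕ) : ZMod 5) = -1 by decide,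
    Nat.cast_zero, map_zero, map_neg, map_one]
  ring

lemma Phi_idM : Phi idM = 1 := by
  rw [Matrix.one_fin_three, Phi, idM]
  norm_num [phi_cons, phi_nil]

lemma Phi_step (k : ℕ) (P : M3) : Phi (step k P) = BurauB (ZMod 5) k * Phi P := by
  match k with
  | 1 =>
    show Phi (step 1 P) = BurauB (ZMod 5) 1 * Phi P
    ext i j
    fin_cases i <;> fin_cases j <;>
      simp [Phi, step, BurauB, Matrix.mul_apply, Fin.sum_univ_three, phi_add, phi_mul,
        phi_vv1, phi_vv2] <;> ring
  | 2 =>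
    show Phi (step 2 P) = BurauB (ZMod 5) 2 * Phi P
    ext i j
    fin_cases i <;> fin_cases j <;>
      simp [Phi, step, BurauB, Matrix.mul_apply, Fin.sum_univ_three, phi_add, phi_mul,
        phi_vv1, phi_vv2] <;> ring
  | 3 =>
    show Phi (step 3 P) = BurauB (ZMod 5) 3 * Phi P
    ext i j
    fin_cases i <;> fin_cases j <;>
      simp [Phi, step, BurauB, Matrix.mul_apply, Fin.sum_univ_three, phi_add, phi_mul,
        phi_vv1, phi_vv2] <;> ring
  | 0 =>
    show Phi P = BurauB (ZMod 5) 0 * Phi P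
    rw [show BurauB (ZMod 5) 0 = 1 from rfl, one_mul]
  | (n + 4) =>
    show Phi P = BurauB (ZMod 5) (n + 4) * Phi P
    rw [show BurauB (ZMod 5) (n + 4) = 1 from rfl, one_mul]

lemma Phi_prodM : ∀ l : List ℕ, (l.map (BurauB (ZMod 5))).prod = Phi (prodM l) := by
  intro l
  induction l with
  | nil =>
    rw [List.map_nil, List.prod_nil, show prodM [] = idM from rfl, Phi_idM]
  | cons k l ih => rw [List.map_cons, List.prod_cons, ih, prodM, Phi_step]

lemma Phi_canonM (A : M3) : Phi (canonM A) = Phi A := by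
  simp [Phi, canonM, phi_canon]

lemma phi_rep : ∀ (n : ℕ) (l : P5), phi (List.replicate n 0 ++ l) = T (n : ℤ) * phi l := by
  intro n
  induction n with
  | zero => intro l; simp
  | succ n ih =>
    intro l
    rw [List.replicate_succ, List.cons_append, phi_cons, ih]
    rw [show ((n + 1 : ℕ) : ℤ) = 1 + (n : ℤ) by push_cast; ring, T_add,
      Nat.cast_zero, map_zero, zero_add, mul_assoc]

lemma phi_z132 : phi z132 = -(T 132) := by
  rw [z132, phi_rep, phi_cons, phi_nil]
  rw [show ((4 : ℕ) : ZMod 5) = -1 by decide]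
  simp [map_neg]

set_option maxRecDepth 1000000 in
set_option maxHeartbeats 4000000 in
lemma big_step : canonM (prodM W2word) = targetM := by decide

end BurauAux
/-- Over `(ℤ/5ℤ)[v,v⁻¹]`, the product of the Burau matrices along the word `W2`
equals `-v^132 · J`, the 5-Burau matrix of `Δ^33`. -/

theorem burau_word_product_W2_mod_five :
    (W2word.map (BurauB (ZMod 5))).prod = (-(T 132 : LaurentPolynomial (ZMod 5))) • Jmat (ZMod 5) := by
  have h1 := BurauAux.Phi_prodM W2word
  rw [h1, ← BurauAux.Phi_canonM, BurauAux.big_step]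
  have hr : (-(T 132 : LaurentPolynomial (ZMod 5))) • Jmat (ZMod 5) =
      !![0, 0, -(T 132); 0, -(T 132), 0; -(T 132), 0, 0] := by
    simp [Jmat, Matrix.smul_cons, Matrix.smul_empty, smul_eq_mul]
  rw [hr, BurauAux.Phi, BurauAux.targetM]
  simp only [BurauAux.phi_z132, BurauAux.phi_nil]
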